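/- For every real number x > 1 and every real number a with 0 < a ≤ 1/4, one has ∑_{k=1}^∞ x^{−2k}/(2k − a)² ≤ 16·∑_{k=1}^∞ x^{−2k}/(8k − 1)² ≤ 0.337/√(x⁴ − 1). -/

import Mathlib

/-!
With `q = x⁻²` the weights are `q^k`, and since `4a ≤ 1` each term of the first series is at
most `16` times the corresponding term of the second. For the second series, keep the first four
terms and bound the tail by `q⁵ ∑ 1/(8i+39)²`, which telescopes against
`1/(8i+35) - 1/(8i+43)` to give `q⁵/280`. Together with `√(x⁴ - 1) ≤ 1/q - q/2` this
reduces the claim to a one-variable polynomial inequality on `q ≥ 0`.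
-/

open Finset

lemma one_div_sq_le_sixteen_div_sq {a t : ℝ} (ha : a ≤ 1 / 4) (ht : 1 / 8 < t) :
    1 / (2 * t - a) ^ 2 ≤ 16 / (8 * t - 1) ^ 2 := by
  have h : 16 / (8 * t - 1) ^ 2 = 1 / ((8 * t - 1) / 4) ^ 2 := by field_simp; norm_num
  rw [h]
  exact one_div_le_one_div_of_le (by nlinarith) (pow_le_pow_left₀ (by linarith) (by linarith) 2)

lemma tsum_div_sq_le_sixteen_mul_tsum {w : ℕ → ℝ} (hw₀ : ∀ k, 0 ≤ w k) (hw : Summable w)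
    {a : ℝ} (ha : a ≤ 1 / 4) :
    ∑' k : ℕ, w k / (2 * ((k : ℝ) + 1) - a) ^ 2 ≤
      16 * ∑' k : ℕ, w k / (8 * ((k : ℝ) + 1) - 1) ^ 2 := by
  have hle : ∀ k : ℕ, w k / (2 * ((k : ℝ) + 1) - a) ^ 2 ≤
      16 * (w k / (8 * ((k : ℝ) + 1) - 1) ^ 2) := fun k => by
    have hk : 1 / 8 < (k : ℝ) + 1 := by linarith [k.cast_nonneg (α := ℝ)]
    have := mul_le_mul_of_nonneg_left (one_div_sq_le_sixteen_div_sq ha hk) (hw₀ k)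
    rwa [mul_one_div, mul_div_assoc', mul_comm (w k), mul_div_assoc] at this
  have hg : Summable fun k : ℕ => w k / (8 * ((k : ℝ) + 1) - 1) ^ 2 := by
    refine hw.of_nonneg_of_le (fun k => div_nonneg (hw₀ k) (sq_nonneg _)) fun k => ?_
    refine div_le_self (hw₀ k) (one_le_pow₀ ?_)
    linarith [k.cast_nonneg (α := ℝ)]
  have hf : Summable fun k : ℕ => w k / (2 * ((k : ℝ) + 1) - a) ^ 2 :=
    (hg.mul_left 16).of_nonneg_of_le (fun k => div_nonneg (hw₀ k) (sq_nonneg _)) hle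
  rw [← tsum_mul_left]
  exact hf.tsum_le_tsum hle (hg.mul_left 16)

/-- `u² ≥ (u - d/2)(u + d/2)`, and the reciprocals of the latter telescope. -/
lemma sum_range_inv_sq_le {d b : ℝ} (hd : 0 < d) (hb : d / 2 < b) (n : ℕ) :
    ∑ i ∈ range n, 1 / (d * i + b) ^ 2 ≤ 1 / (d * (b - d / 2)) := by
  have hpos : ∀ i : ℕ, 0 < d * i + b - d / 2 := fun i => by
    have : 0 ≤ d * i := by positivity
    linarith
  set t : ℕ → ℝ := fun i => 1 / (d * (d * i + b - d / 2))
  have step : ∀ i : ℕ, 1 / (d * i + b) ^ 2 ≤ t i - t (i + 1) := fun i => by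
    have h₁ := hpos i
    have h₂ := hpos (i + 1)
    push_cast at h₂
    have : t i - t (i + 1) = 1 / ((d * i + b - d / 2) * (d * i + b + d / 2)) := by
      simp only [t]; push_cast
      rw [div_sub_div _ _ (by positivity) (by positivity)]
      field_simp; ring
    rw [this]
    exact one_div_le_one_div_of_le (mul_pos h₁ (by linarith)) (by nlinarith)
  calc ∑ i ∈ range n, 1 / (d * i + b) ^ 2 ≤ ∑ i ∈ range n, (t i - t (i + 1)) :=
        sum_le_sum fun i _ => step i
    _ = t 0 - t n := sum_range_sub' t n
    _ ≤ t 0 := by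
      have : 0 ≤ t n := by have := hpos n; simp only [t]; positivity
      linarith
    _ = 1 / (d * (b - d / 2)) := by simp [t]

lemma sum_range_pow_div_sq_le {q : ℝ} (hq₀ : 0 ≤ q) (hq₁ : q ≤ 1) (n : ℕ) :
    ∑ i ∈ range n, q ^ (i + 5) / (8 * (i : ℝ) + 39) ^ 2 ≤ q ^ 5 / 280 := by
  calc ∑ i ∈ range n, q ^ (i + 5) / (8 * (i : ℝ) + 39) ^ 2
      ≤ ∑ i ∈ range n, q ^ 5 * (1 / (8 * (i : ℝ) + 39) ^ 2) := by
        refine sum_le_sum fun i _ => ?_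
        rw [mul_one_div]
        exact div_le_div_of_nonneg_right (pow_le_pow_of_le_one hq₀ hq₁ (by omega)) (sq_nonneg _)
    _ = q ^ 5 * ∑ i ∈ range n, 1 / (8 * (i : ℝ) + 39) ^ 2 := (mul_sum ..).symm
    _ ≤ q ^ 5 * (1 / (8 * (39 - 8 / 2))) := by
        gcongr
        exact sum_range_inv_sq_le (by norm_num) (by norm_num) n
    _ = q ^ 5 / 280 := by ring

lemma tsum_pow_div_sq_le {q : ℝ} (hq₀ : 0 ≤ q) (hq₁ : q ≤ 1) :
    ∑' k : ℕ, q ^ (k + 1) / (8 * ((k : ℝ) + 1) - 1) ^ 2 ≤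
      q / 49 + q ^ 2 / 225 + q ^ 3 / 529 + q ^ 4 / 961 + q ^ 5 / 280 := by
  set f : ℕ → ℝ := fun k => q ^ (k + 1) / (8 * ((k : ℝ) + 1) - 1) ^ 2
  have hf₀ : ∀ k, 0 ≤ f k := fun k => by positivity
  have htail : (fun i => f (i + 4)) = fun i : ℕ => q ^ (i + 5) / (8 * (i : ℝ) + 39) ^ 2 := by
    ext i; simp only [f]; push_cast; ring_nf
  have hsum := sum_range_pow_div_sq_le hq₀ hq₁
  rw [← htail] at hsum
  have hf : Summable f :=
    (summable_nat_add_iff 4).1 (summable_of_sum_range_le (fun i => hf₀ _) hsum)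
  rw [← hf.sum_add_tsum_nat_add 4]
  have head : ∑ k ∈ range 4, f k = q / 49 + q ^ 2 / 225 + q ^ 3 / 529 + q ^ 4 / 961 := by
    simp only [f, sum_range_succ, sum_range_zero]; norm_num
  linarith [Real.tsum_le_of_sum_range_le (fun i => hf₀ _) hsum]

lemma sqrt_sq_sub_one_le {y : ℝ} (hy : 1 ≤ y) : √(y ^ 2 - 1) ≤ y - 1 / (2 * y) := by
  have : 1 / (2 * y) ≤ y := by
    rw [div_le_iff₀ (by positivity)]; nlinarith
  rw [Real.sqrt_le_iff]
  refine ⟨by linarith, ?_⟩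
  have : (y - 1 / (2 * y)) ^ 2 = y ^ 2 - 1 + 1 / (2 * y) ^ 2 := by field_simp; ring
  rw [this]
  linarith [(by positivity : 0 ≤ 1 / (2 * y) ^ 2)]

lemma sixteen_mul_majorant_mul_le {q : ℝ} (hq : 0 < q) :
    16 * (q / 49 + q ^ 2 / 225 + q ^ 3 / 529 + q ^ 4 / 961 + q ^ 5 / 280) * (1 / q - q / 2) ≤
      0.337 := by
  have : 16 * (q / 49 + q ^ 2 / 225 + q ^ 3 / 529 + q ^ 4 / 961 + q ^ 5 / 280) * (1 / q - q / 2) =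
      16 * (1 / 49 + q / 225 + q ^ 2 / 529 + q ^ 3 / 961 + q ^ 4 / 280) * (1 - q ^ 2 / 2) := by
    field_simp
  rw [this]
  -- the maximum over `q ≥ 0` is `≈ 0.33587`, attained near `q ≈ 0.2625`
  nlinarith [sq_nonneg (q - 27 / 100), sq_nonneg (q ^ 2 - 27 / 100 * q), sq_nonneg (q ^ 2 - 1),
    pow_pos hq 3]

theorem trivial_zero_sum_bound (x a : ℝ) (hx : 1 < x) (ha₁ : a ≤ 1 / 4) :
    (∑' k : ℕ, 1 / x ^ (2 * (k + 1)) / (2 * ((k : ℝ) + 1) - a) ^ 2 ≤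
        16 * ∑' k : ℕ, 1 / x ^ (2 * (k + 1)) / (8 * ((k : ℝ) + 1) - 1) ^ 2) ∧
      16 * ∑' k : ℕ, 1 / x ^ (2 * (k + 1)) / (8 * ((k : ℝ) + 1) - 1) ^ 2 ≤
        0.337 / Real.sqrt (x ^ 4 - 1) := by
  have hx₂ : 1 < x ^ 2 := one_lt_pow₀ hx two_ne_zero
  set q := (x ^ 2)⁻¹ with hq
  have hq₀ : 0 < q := by positivity
  have hq₁ : q < 1 := inv_lt_one_of_one_lt₀ hx₂
  have hw : ∀ k : ℕ, 1 / x ^ (2 * (k + 1)) = q ^ (k + 1) := fun k => by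
    rw [pow_mul, one_div, inv_pow]
  simp only [hw]
  refine ⟨tsum_div_sq_le_sixteen_mul_tsum (fun k => by positivity)
    ((summable_nat_add_iff 1).2 (summable_geometric_of_lt_one hq₀.le hq₁)) ha₁, ?_⟩
  have hsqrt : √(x ^ 4 - 1) ≤ 1 / q - q / 2 :=
    calc √(x ^ 4 - 1) = √((x ^ 2) ^ 2 - 1) := by ring_nf
      _ ≤ x ^ 2 - 1 / (2 * x ^ 2) := sqrt_sq_sub_one_le hx₂.le
      _ = 1 / q - q / 2 := by rw [hq]; field_simp
  rw [le_div_iff₀ (Real.sqrt_pos.2 (by nlinarith))]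
  calc 16 * (∑' k : ℕ, q ^ (k + 1) / (8 * ((k : ℝ) + 1) - 1) ^ 2) * √(x ^ 4 - 1)
      ≤ 16 * (q / 49 + q ^ 2 / 225 + q ^ 3 / 529 + q ^ 4 / 961 + q ^ 5 / 280) *
          (1 / q - q / 2) := by
        gcongr
        exact tsum_pow_div_sq_le hq₀.le hq₁.le
    _ ≤ 0.337 := sixteen_mul_majorant_mul_le hq₀
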